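/- Let κ < 0, u₀ < 0, and let (u,v) solve u' = v/√(1+v²), v' = κu with u(0) = u₀, v(0) = 0. Let r₀ be the first positive zero of u. Then r₀ > √(u₀² - 2/κ) > √(-2/κ). -/

import Mathlib

/-!
Since `u < 0` before its first zero, `v' = κu > 0`, so `v > 0` and `u` increases; hence
`v' = κu < κu₀` and `v(r) < κu₀ r`. As `t ↦ t / √(1 + t²)` is increasing, `u'` is then dominated
by the slope of the hyperbola `y₄` through `(0, u₀)`, so `0 = u(r₀) < y₄(r₀)`, and `y₄` vanishes
at `√(u₀² - 2/κ)`.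
-/

open Set

theorem neg_on_Ioo_of_ne_zero {u : ℝ → ℝ} {a b : ℝ} (hcont : ContinuousOn u (Icc a b))
    (ha : u a < 0) (hne : ∀ x ∈ Ioo a b, u x ≠ 0) : ∀ x ∈ Ioo a b, u x < 0 := by
  intro x hx
  by_contra! hux
  obtain ⟨y, hy, huy⟩ := intermediate_value_Ioo hx.1.le
    (hcont.mono (Icc_subset_Icc_right hx.2.le)) ⟨ha, (hne x hx).symm.lt_of_le hux⟩
  exact hne y ⟨hy.1, hy.2.trans hx.2⟩ huy

theorem lt_on_Ioc_of_hasDerivAt_lt {f g f' g' : ℝ → ℝ} {a b : ℝ}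
    (hf : ∀ x, HasDerivAt f (f' x) x) (hg : ∀ x, HasDerivAt g (g' x) x)
    (hderiv : ∀ x ∈ Ioo a b, f' x < g' x) (hfg : f a ≤ g a) : ∀ x ∈ Ioc a b, f x < g x := by
  have hmono : StrictMonoOn (g - f) (Icc a b) := by
    refine strictMonoOn_of_deriv_pos (convex_Icc a b) ?_ fun x hx => ?_
    · exact fun x _ => ((hg x).sub (hf x)).continuousAt.continuousWithinAt
    · rw [interior_Icc] at hx
      rw [((hg x).sub (hf x)).deriv]
      exact sub_pos.2 (hderiv x hx)
  intro x hx
  have := hmono (left_mem_Icc.2 (hx.1.le.trans hx.2)) (Ioc_subset_Icc_self hx) hx.1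
  simp only [Pi.sub_apply] at this
  linarith

theorem strictMono_div_sqrt_one_add_sq : StrictMono fun t : ℝ => t / √(1 + t ^ 2) := by
  intro s t hst
  have hA : 0 < √(1 + s ^ 2) := Real.sqrt_pos.2 (by positivity)
  have hB : 0 < √(1 + t ^ 2) := Real.sqrt_pos.2 (by positivity)
  have hA2 : √(1 + s ^ 2) ^ 2 = 1 + s ^ 2 := Real.sq_sqrt (by positivity)
  have hB2 : √(1 + t ^ 2) ^ 2 = 1 + t ^ 2 := Real.sq_sqrt (by positivity)
  set A := √(1 + s ^ 2)
  set B := √(1 + t ^ 2)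
  have hAB : s * t < A * B + 1 := by
    nlinarith [mul_pos hA hB, sq_nonneg (A * B - s * t), sq_nonneg (s * t)]
  -- `AB ≥ |st|` makes the second factor positive.
  have factor : (t * A - s * B) * (A + B) = (t - s) * (1 - s * t + A * B) := by
    linear_combination t * hA2 - s * hB2
  rw [div_lt_div_iff₀ hA hB]
  nlinarith [mul_pos (sub_pos.2 hst) (show 0 < 1 - s * t + A * B by linarith)]

/-- The hyperbola `y₄(r) = √(r² + 1/c²) + u₀ - 1/c` of the comparison argument (with `c = κu₀ > 0`),
rescaled so that its slope at `r` is `t / √(1 + t²)` for `t = c r`. -/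
noncomputable def pendentHyperbola (c u₀ r : ℝ) : ℝ := u₀ + (√(1 + (c * r) ^ 2) - 1) / c

theorem pendentHyperbola_zero (c u₀ : ℝ) : pendentHyperbola c u₀ 0 = u₀ := by
  simp [pendentHyperbola]

theorem hasDerivAt_pendentHyperbola {c : ℝ} (hc : c ≠ 0) (u₀ r : ℝ) :
    HasDerivAt (pendentHyperbola c u₀) (c * r / √(1 + (c * r) ^ 2)) r := by
  have hpos : 0 < 1 + (c * r) ^ 2 := by positivity
  have h : HasDerivAt (fun x : ℝ => 1 + (c * x) ^ 2) (2 * c ^ 2 * r) r :=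
    ((((hasDerivAt_id' r).const_mul c).fun_pow 2).const_add 1).congr_deriv (by push_cast; ring)
  refine (((h.sqrt hpos.ne').sub_const 1).div_const c).const_add u₀ |>.congr_deriv ?_
  field_simp

theorem sq_lt_of_pendentHyperbola_pos {κ u₀ r : ℝ} (hκ : κ < 0) (hu₀ : u₀ < 0)
    (h : 0 < pendentHyperbola (κ * u₀) u₀ r) : u₀ ^ 2 - 2 / κ < r ^ 2 := by
  have hc : 0 < κ * u₀ := mul_pos_of_neg_of_neg hκ hu₀
  have hsqrt : -u₀ * (κ * u₀) < √(1 + (κ * u₀ * r) ^ 2) - 1 := by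
    rw [← lt_div_iff₀ hc]
    unfold pendentHyperbola at h
    linarith
  have hsq : (1 - κ * u₀ * u₀) ^ 2 < 1 + (κ * u₀ * r) ^ 2 :=
    (Real.lt_sqrt (by nlinarith)).1 (by linarith)
  have hscaled : κ * (r ^ 2 - u₀ ^ 2) < -2 := by
    nlinarith [mul_pos (neg_pos.2 hκ) (sq_pos_of_neg hu₀)]
  have : -2 / κ < r ^ 2 - u₀ ^ 2 := by
    rw [div_lt_iff_of_neg hκ]
    linarith
  linarith [neg_div κ 2]

/-- Pendent case: lower bound on the first positive zero. -/
theorem stmt_19 (κ u₀ : ℝ) (hκ : κ < 0) (hu₀ : u₀ < 0) (u v : ℝ → ℝ) (r₀ : ℝ)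
    (hu : ∀ r : ℝ, HasDerivAt u (v r / Real.sqrt (1 + v r ^ 2)) r)
    (hv : ∀ r : ℝ, HasDerivAt v (κ * u r) r)
    (hu0 : u 0 = u₀) (hv0 : v 0 = 0)
    (hr₀ : 0 < r₀) (hzero : u r₀ = 0)
    (hfirst : ∀ r ∈ Set.Ioo (0:ℝ) r₀, u r ≠ 0) :
    Real.sqrt (-2 / κ) < Real.sqrt (u₀ ^ 2 - 2 / κ) ∧
    Real.sqrt (u₀ ^ 2 - 2 / κ) < r₀ := by
  set c := κ * u₀
  have hc : 0 < c := mul_pos_of_neg_of_neg hκ hu₀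
  have hneg : ∀ r ∈ Ioo 0 r₀, u r < 0 :=
    neg_on_Ioo_of_ne_zero (continuous_iff_continuousAt.2 fun r => (hu r).continuousAt).continuousOn
      (hu0 ▸ hu₀) hfirst
  have hv_pos : ∀ r ∈ Ioc 0 r₀, 0 < v r :=
    lt_on_Ioc_of_hasDerivAt_lt (fun _ => hasDerivAt_const _ 0) hv
      (fun r hr => mul_pos_of_neg_of_neg hκ (hneg r hr)) hv0.ge
  have hu_gt : ∀ r ∈ Ioc 0 r₀, u₀ < u r :=
    lt_on_Ioc_of_hasDerivAt_lt (fun _ => hasDerivAt_const _ u₀) hu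
      (fun r hr => div_pos (hv_pos r (Ioo_subset_Ioc_self hr)) (Real.sqrt_pos.2 (by positivity)))
      hu0.ge
  have hv_lt : ∀ r ∈ Ioc 0 r₀, v r < c * r :=
    lt_on_Ioc_of_hasDerivAt_lt hv (fun r => (hasDerivAt_id r).const_mul c)
      (fun r hr => by simpa using mul_lt_mul_of_neg_left (hu_gt r (Ioo_subset_Ioc_self hr)) hκ)
      (by simp [hv0])
  have hu_lt : u r₀ < pendentHyperbola c u₀ r₀ :=
    lt_on_Ioc_of_hasDerivAt_lt hu (hasDerivAt_pendentHyperbola hc.ne' u₀)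
      (fun r hr => strictMono_div_sqrt_one_add_sq (hv_lt r (Ioo_subset_Ioc_self hr)))
      (by rw [hu0, pendentHyperbola_zero]) r₀ ⟨hr₀, le_rfl⟩
  rw [hzero] at hu_lt
  have hr₀_sq := sq_lt_of_pendentHyperbola_pos hκ hu₀ hu_lt
  constructor
  · exact Real.sqrt_lt_sqrt (div_nonneg_of_nonpos (by norm_num) hκ.le)
      (by linarith [neg_div κ 2, sq_pos_of_neg hu₀])
  · exact (Real.sqrt_lt' hr₀).2 hr₀_sq
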